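/- arXiv:2407.12970 — 4 statements merged into one kernel-verified Lean document; each statement's English description precedes it below -/
import Mathlib

section
/- Let X be a real-valued random variable and let U′ be uniformly distributed on [−1/2, 1/2), independent of X. Define Y = ⌊X − U′⌉ + U′, where ⌊·⌉ denotes rounding to the nearest integer. Then the error Y − X is uniformly distributed on an interval of length 1 centered at 0 (its law, as a measure, equals the uniform probability measure on [−1/2, 1/2]), and Y − X is independent of X. -/
/-!
The error is `round (X - U') - (X - U')`, the representative of `U' - X` modulo `1` in
`(-1/2, 1/2]`. Conditionally on `X = x`, the variable `U' - x` is uniform on an interval of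
length one, so its image in `ℝ/ℤ` is Haar-distributed whatever `x` is, and reading it back in
the window `(-1/2, 1/2]` gives the uniform law there. Since this conditional law does not depend
on `x`, the error is independent of `X`.
-/

open MeasureTheory ProbabilityTheory Set

namespace AddCircle

variable {T : ℝ} [hT : Fact (0 < T)]

theorem toIocMod_eq_comp (a : ℝ) :
    toIocMod hT.out a = Subtype.val ∘ equivIoc T a ∘ ((↑) : ℝ → AddCircle T) := by
  funext b
  simp [equivIoc, QuotientAddGroup.equivIocMod_coe]

theorem measurable_toIocMod (a : ℝ) : Measurable (toIocMod hT.out a) := by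
  rw [toIocMod_eq_comp]
  exact measurable_subtype_coe.comp
    ((measurableEquivIoc T a).measurable.comp AddCircle.measurable_mk')

theorem measurePreserving_toIocMod_sub (a c x : ℝ) :
    MeasurePreserving (fun u => toIocMod hT.out a (u - x)) (volume.restrict (Ioc c (c + T)))
      (volume.restrict (Ioc a (a + T))) := by
  have hcomp : (fun u => toIocMod hT.out a (u - x))
      = Subtype.val ∘ equivIoc T a ∘ (· - (x : AddCircle T)) ∘ ((↑) : ℝ → AddCircle T) := by
    rw [toIocMod_eq_comp]
    rfl
  rw [hcomp]
  exact ((measurePreserving_subtype_coe measurableSet_Ioc).comp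
    (measurePreserving_equivIoc T)).comp
    ((measurePreserving_sub_right volume _).comp (AddCircle.measurePreserving_mk T c))

end AddCircle

theorem round_sub_add_sub_eq_toIocMod (x u : ℝ) :
    (round (x - u) : ℝ) + u - x = toIocMod one_pos (-(1/2)) (u - x) := by
  have hlo := Int.floor_le (x - u + 1/2)
  have hhi := Int.lt_floor_add_one (x - u + 1/2)
  rw [eq_comm, toIocMod_eq_iff, round_eq]
  refine ⟨⟨by linarith, by linarith⟩, -round (x - u), ?_⟩
  rw [round_eq]
  ring

theorem MeasureTheory.Measure.map_prod_shear_eq_prod {α β γ : Type*} [MeasurableSpace α]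
    [MeasurableSpace β] [MeasurableSpace γ] (μ : Measure α) [SigmaFinite μ] (ν : Measure β)
    [SFinite ν] (ρ : Measure γ) [SigmaFinite ρ] {f : α → β → γ}
    (hf : Measurable (Function.uncurry f)) (hfν : ∀ x, ν.map (f x) = ρ) :
    (μ.prod ν).map (fun p => (p.1, f p.1 p.2)) = μ.prod ρ := by
  set g : α × β → α × γ := fun p => (p.1, f p.1 p.2)
  have hg : Measurable g := measurable_fst.prodMk hf
  refine (prod_eq fun s t hs ht => ?_).symm
  have hslice (x : α) : ν (Prod.mk x ⁻¹' (g ⁻¹' s ×ˢ t)) = s.indicator (fun _ => ρ t) x := by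
    by_cases hx : x ∈ s
    · have hpre : Prod.mk x ⁻¹' (g ⁻¹' s ×ˢ t) = f x ⁻¹' t := by
        ext u; simp [g, hx]
      rw [hpre, indicator_of_mem hx, ← hfν x, map_apply hf.of_uncurry_left ht]
    · have hpre : Prod.mk x ⁻¹' (g ⁻¹' s ×ˢ t) = ∅ := by
        ext u; simp [g, hx]
      rw [hpre, indicator_of_notMem hx, measure_empty]
  rw [map_apply hg (hs.prod ht), prod_apply (hg (hs.prod ht))]
  simp_rw [hslice]
  rw [lintegral_indicator_const hs, mul_comm]

theorem ProbabilityTheory.IndepFun.map_prodMk_eq_prod {Ω α β γ : Type*} [MeasurableSpace Ω]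
    [MeasurableSpace α] [MeasurableSpace β] [MeasurableSpace γ] {P : Measure Ω}
    [IsFiniteMeasure P] {X : Ω → α} {U : Ω → β} (hX : Measurable X) (hU : Measurable U)
    (hXU : IndepFun X U P) {ρ : Measure γ} [SigmaFinite ρ] {f : α → β → γ}
    (hf : Measurable (Function.uncurry f)) (hfU : ∀ x, (P.map U).map (f x) = ρ) :
    P.map (fun ω => (X ω, f (X ω) (U ω))) = (P.map X).prod ρ := by
  have hXU' := (indepFun_iff_map_prod_eq_prod_map_map hX.aemeasurable hU.aemeasurable).mp hXU
  rw [← Measure.map_prod_shear_eq_prod _ _ _ hf hfU, ← hXU']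
  exact (Measure.map_map (g := fun p : α × β => (p.1, f p.1 p.2)) (measurable_fst.prodMk hf)
    (hX.prodMk hU)).symm

/-- One-dimensional subtractive dithered quantization: if `X` is a real random variable,
`U'` is uniform on `[-1/2, 1/2)` and independent of `X`, and
`Y = ⌊X - U'⌉ + U'` (rounding to the nearest integer), then the error `Y - X` is uniformly
distributed on `[-1/2, 1/2]` and is independent of `X`. -/
theorem stmt_1 {Ω : Type*} [MeasurableSpace Ω] (P : Measure Ω) [IsProbabilityMeasure P]
    (X U' : Ω → ℝ) (hX : Measurable X) (hU' : Measurable U')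
    (hlaw : P.map U' = volume.restrict (Set.Ico (-(1/2) : ℝ) (1/2)))
    (hindep : IndepFun X U' P)
    (Y : Ω → ℝ) (hY : Y = fun ω => (round (X ω - U' ω) : ℝ) + U' ω) :
    P.map (fun ω => Y ω - X ω) = volume.restrict (Set.Icc (-(1/2) : ℝ) (1/2)) ∧
      IndepFun (fun ω => Y ω - X ω) X P := by
  have hE (ω : Ω) : Y ω - X ω = toIocMod one_pos (-(1/2)) (U' ω - X ω) := by
    rw [hY, ← round_sub_add_sub_eq_toIocMod]
  simp only [hE]
  have hslice (x : ℝ) : (P.map U').map (fun u => toIocMod one_pos (-(1/2)) (u - x))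
      = volume.restrict (Set.Icc (-(1/2) : ℝ) (1/2)) := by
    have h := AddCircle.measurePreserving_toIocMod_sub (T := 1) (-(1/2)) (-(1/2)) x
    rw [show -(1/2) + 1 = (1/2 : ℝ) by norm_num] at h
    rw [hlaw, Measure.restrict_congr_set Ico_ae_eq_Ioc,
      Measure.restrict_congr_set Ioc_ae_eq_Icc.symm, h.map_eq]
  have hmeas : Measurable (fun ω => toIocMod one_pos (-(1/2)) (U' ω - X ω)) :=
    (AddCircle.measurable_toIocMod _).comp (hU'.sub hX)
  have hf : Measurable (Function.uncurry fun x u => toIocMod one_pos (-(1/2) : ℝ) (u - x)) :=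
    (AddCircle.measurable_toIocMod _).comp (measurable_snd.sub measurable_fst)
  have hjoint := hindep.map_prodMk_eq_prod hX hU' hf hslice
  have : IsProbabilityMeasure (P.map X) := Measure.isProbabilityMeasure_map hX.aemeasurable
  have hlawE : P.map (fun ω => toIocMod one_pos (-(1/2)) (U' ω - X ω))
      = volume.restrict (Set.Icc (-(1/2) : ℝ) (1/2)) := by
    rw [← Measure.snd_map_prodMk hX, hjoint, Measure.snd_prod]
  refine ⟨hlawE, IndepFun.symm ?_⟩
  rw [indepFun_iff_map_prod_eq_prod_map_map hX.aemeasurable hmeas.aemeasurable, hlawE]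
  exact hjoint
end

section
/- Let a > 0 and b > 0 be real numbers satisfying b ≥ 3a² and 21a² − 5b > 0. Define s = 2√3 · sqrt( (√30·a·√(b − 3a²) + 15a² − 5b) / (21a² − 5b) ) and λ = sqrt( (−√30·√(b − 3a²) + 6a) / (21a² − 5b) ). Then s and λ are well defined (the expressions under the square roots are nonnegative) and they satisfy the moment-matching system: λ²·a = 1 − s²/12 and λ⁴·b = 7s⁴/240 − s²/2 + 3. In particular, with a = Γ(1 + 2/k) and b = Γ(1 + 4/k) for a parameter k > 0 satisfying the above inequalities, a Weibull(λ, k) random variable Z satisfies E[Z²] = 1 − s²/12 and E[Z⁴] = 7s⁴/240 − s²/2 + 3. -/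
/-!
Write `u = lam²` and `v = s² / 12`. The two moment equations read `a u = 1 - v` and
`b u² = 21/5 v² - 6 v + 3`; eliminating `v` leaves the quadratic
`(21a² - 5b) u² - 12 a u + 6 = 0`, whose discriminant is `(2√30·√(b - 3a²))²`,
and `lam²` is its smaller root. The Weibull moments `E[Zᵐ] = lamᵐ Γ(1 + m/k)` follow
from the substitution `t = lam x` and the Gamma integral
`∫₀^∞ x^q exp(-xᵏ) dx = Γ((q + 1)/k) / k`.
-/

open MeasureTheory

/-- The Lebesgue density of the Weibull distribution with scale `lam > 0` and shape `k > 0`. -/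
noncomputable def weibullPDF (lam k t : ℝ) : ℝ :=
  if 0 < t then (k / lam) * (t / lam) ^ (k - 1) * Real.exp (-((t / lam) ^ k)) else 0

open Real Set

lemma weibullPDF_nonneg {lam k : ℝ} (hlam : 0 < lam) (hk : 0 < k) (t : ℝ) :
    0 ≤ weibullPDF lam k t := by
  unfold weibullPDF
  split_ifs <;> positivity

lemma measurable_weibullPDF (lam k : ℝ) : Measurable (weibullPDF lam k) :=
  Measurable.ite measurableSet_Ioi (by fun_prop) measurable_const

lemma rpow_mul_weibullPDF_scale_mul {lam k : ℝ} (hlam : 0 < lam) (p : ℝ) {x : ℝ}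
    (hx : 0 < x) :
    (lam * x) ^ p * weibullPDF lam k (lam * x) =
      lam ^ p / lam * (k * (x ^ (p + k - 1) * exp (-x ^ k))) := by
  rw [weibullPDF, if_pos (mul_pos hlam hx), mul_div_cancel_left₀ x hlam.ne', mul_rpow hlam.le hx.le,
    rpow_sub_one hx.ne' k, rpow_sub_one hx.ne' (p + k), rpow_add hx]
  ring

lemma setIntegral_rpow_mul_weibullPDF {lam k p : ℝ} (hlam : 0 < lam) (hk : 0 < k)
    (hp : -k < p) :
    ∫ t in Ioi 0, t ^ p * weibullPDF lam k t = lam ^ p * Gamma (1 + p / k) := by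
  have hsub := integral_comp_mul_left_Ioi (fun t => t ^ p * weibullPDF lam k t) 0 hlam
  rw [mul_zero] at hsub
  calc ∫ t in Ioi 0, t ^ p * weibullPDF lam k t
      = lam * ∫ x in Ioi 0, (lam * x) ^ p * weibullPDF lam k (lam * x) := by
        rw [hsub, smul_eq_mul, mul_inv_cancel_left₀ hlam.ne']
    _ = lam * ∫ x in Ioi 0, lam ^ p / lam * (k * (x ^ (p + k - 1) * exp (-x ^ k))) :=
        congrArg _ (setIntegral_congr_fun measurableSet_Ioi
          fun x hx => rpow_mul_weibullPDF_scale_mul hlam p hx)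
    _ = lam ^ p * Gamma (1 + p / k) := by
        rw [integral_const_mul, integral_const_mul,
          integral_rpow_mul_exp_neg_rpow hk (by linarith), sub_add_cancel,
          add_div, div_self hk.ne']
        field_simp
        ring_nf

lemma integral_pow_withDensity_weibullPDF {lam k : ℝ} (hlam : 0 < lam) (hk : 0 < k) (n : ℕ) :
    ∫ t, t ^ n ∂volume.withDensity (fun t => ENNReal.ofReal (weibullPDF lam k t)) =
      lam ^ n * Gamma (1 + n / k) := by
  rw [integral_withDensity_eq_integral_toReal_smul
      (measurable_weibullPDF lam k).ennreal_ofReal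
      (.of_forall fun _ => ENNReal.ofReal_lt_top)]
  have hdensity (t : ℝ) : (ENNReal.ofReal (weibullPDF lam k t)).toReal = weibullPDF lam k t :=
    ENNReal.toReal_ofReal (weibullPDF_nonneg hlam hk t)
  simp_rw [hdensity, smul_eq_mul, mul_comm (weibullPDF lam k _)]
  have hzero : ∀ t ∉ Ioi (0 : ℝ), t ^ n * weibullPDF lam k t = 0 := fun t ht => by
    rw [weibullPDF, if_neg (show ¬0 < t from ht), mul_zero]
  rw [← setIntegral_eq_integral_of_forall_compl_eq_zero hzero, ← rpow_natCast lam,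
    ← setIntegral_rpow_mul_weibullPDF hlam hk (by linarith [n.cast_nonneg (α := ℝ)])]
  exact setIntegral_congr_fun measurableSet_Ioi fun t _ => by rw [rpow_natCast]

lemma integral_pow_of_map_eq_weibull {lam k : ℝ} (hlam : 0 < lam) (hk : 0 < k)
    {Ω : Type*} [MeasurableSpace Ω] {P : Measure Ω} {Z : Ω → ℝ} (hZ : Measurable Z)
    (hmap : P.map Z = volume.withDensity (fun t => ENNReal.ofReal (weibullPDF lam k t)))
    (n : ℕ) :
    ∫ ω, Z ω ^ n ∂P = lam ^ n * Gamma (1 + n / k) := by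
  rw [← integral_pow_withDensity_weibullPDF hlam hk, ← hmap,
    integral_map hZ.aemeasurable (by fun_prop)]

namespace MomentMatching

variable {a b r : ℝ}

/-- The smaller root of `(21a² - 5b) u² - 12 a u + 6`, when `r = √(30 (b - 3a²))`. -/
noncomputable def lowerRoot (a b r : ℝ) : ℝ := (6 * a - r) / (21 * a ^ 2 - 5 * b)

lemma lowerRoot_pos (ha : 0 < a) (hr : r ^ 2 = 30 * (b - 3 * a ^ 2))
    (hD : 0 < 21 * a ^ 2 - 5 * b) : 0 < lowerRoot a b r :=
  div_pos (by nlinarith) hD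

lemma lowerRoot_isRoot (hr : r ^ 2 = 30 * (b - 3 * a ^ 2)) (hD : 21 * a ^ 2 - 5 * b ≠ 0) :
    (21 * a ^ 2 - 5 * b) * lowerRoot a b r ^ 2 - 12 * a * lowerRoot a b r + 6 = 0 := by
  rw [lowerRoot]
  field_simp
  linear_combination hr

lemma div_eq_one_sub_mul_lowerRoot (hD : 21 * a ^ 2 - 5 * b ≠ 0) :
    (a * r + 15 * a ^ 2 - 5 * b) / (21 * a ^ 2 - 5 * b) = 1 - a * lowerRoot a b r := by
  rw [lowerRoot, eq_sub_iff_add_eq, mul_div_assoc', ← add_div, div_eq_one_iff_eq hD]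
  ring

lemma one_sub_mul_lowerRoot_nonneg (ha : 0 < a) (hr0 : 0 ≤ r)
    (hr : r ^ 2 = 30 * (b - 3 * a ^ 2)) (hD : 0 < 21 * a ^ 2 - 5 * b) :
    0 ≤ 1 - a * lowerRoot a b r := by
  rw [← div_eq_one_sub_mul_lowerRoot hD.ne']
  exact div_nonneg (by nlinarith [mul_nonneg (mul_nonneg ha.le hr0) hr0]) hD.le

end MomentMatching

theorem stmt_7_general (a b s lam : ℝ) (ha : 0 < a)
    (hb3a : 3 * a ^ 2 ≤ b) (h21 : 0 < 21 * a ^ 2 - 5 * b)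
    (hs : s = 2 * Real.sqrt 3 *
      Real.sqrt ((Real.sqrt 30 * a * Real.sqrt (b - 3 * a ^ 2) + 15 * a ^ 2 - 5 * b) /
        (21 * a ^ 2 - 5 * b)))
    (hlam : lam = Real.sqrt ((-(Real.sqrt 30) * Real.sqrt (b - 3 * a ^ 2) + 6 * a) /
        (21 * a ^ 2 - 5 * b))) :
    0 ≤ (Real.sqrt 30 * a * Real.sqrt (b - 3 * a ^ 2) + 15 * a ^ 2 - 5 * b) /
        (21 * a ^ 2 - 5 * b) ∧
    0 ≤ (-(Real.sqrt 30) * Real.sqrt (b - 3 * a ^ 2) + 6 * a) / (21 * a ^ 2 - 5 * b) ∧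
    lam ^ 2 * a = 1 - s ^ 2 / 12 ∧
    lam ^ 4 * b = 7 * s ^ 4 / 240 - s ^ 2 / 2 + 3 ∧
    (∀ k : ℝ, 0 < k → a = Real.Gamma (1 + 2 / k) → b = Real.Gamma (1 + 4 / k) →
      ∀ {Ω : Type} [inst : MeasurableSpace Ω] (P : Measure Ω), IsProbabilityMeasure P →
        ∀ Z : Ω → ℝ, Measurable Z →
          P.map Z = volume.withDensity (fun t => ENNReal.ofReal (weibullPDF lam k t)) →
            (∫ ω, (Z ω) ^ 2 ∂P = 1 - s ^ 2 / 12) ∧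
              (∫ ω, (Z ω) ^ 4 ∂P = 7 * s ^ 4 / 240 - s ^ 2 / 2 + 3)) := by
  set r := √30 * √(b - 3 * a ^ 2)
  have hr : r ^ 2 = 30 * (b - 3 * a ^ 2) := by
    rw [mul_pow, sq_sqrt (by norm_num), sq_sqrt (by linarith)]
  rw [show √30 * a * √(b - 3 * a ^ 2) = a * r by ring,
    MomentMatching.div_eq_one_sub_mul_lowerRoot h21.ne'] at hs ⊢
  rw [show (-√30 * √(b - 3 * a ^ 2) + 6 * a) / (21 * a ^ 2 - 5 * b) =
    MomentMatching.lowerRoot a b r by rw [MomentMatching.lowerRoot]; ring] at hlam ⊢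
  have hquad := MomentMatching.lowerRoot_isRoot hr h21.ne'
  have hu := MomentMatching.lowerRoot_pos ha hr h21
  have hv := MomentMatching.one_sub_mul_lowerRoot_nonneg ha (by positivity) hr h21
  set u := MomentMatching.lowerRoot a b r
  have hlam2 : lam ^ 2 = u := by rw [hlam, sq_sqrt hu.le]
  have hs2 : s ^ 2 = 12 * (1 - a * u) := by
    rw [hs, mul_pow, mul_pow, sq_sqrt hv, sq_sqrt (by norm_num : (0 : ℝ) ≤ 3)]; ring
  have hmoment2 : lam ^ 2 * a = 1 - s ^ 2 / 12 := by rw [hlam2, hs2]; ring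
  have hmoment4 : lam ^ 4 * b = 7 * s ^ 4 / 240 - s ^ 2 / 2 + 3 := by
    rw [show lam ^ 4 = (lam ^ 2) ^ 2 by ring, show s ^ 4 = (s ^ 2) ^ 2 by ring, hlam2, hs2]
    linear_combination (-1 / 5) * hquad
  refine ⟨hv, hu.le, hmoment2, hmoment4, fun k hk ha_eq hb_eq Ω _ P _ Z hZ hmap => ?_⟩
  have hlam_pos : 0 < lam := hlam ▸ sqrt_pos.2 hu
  rw [integral_pow_of_map_eq_weibull hlam_pos hk hZ hmap 2,
    integral_pow_of_map_eq_weibull hlam_pos hk hZ hmap 4]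
  push_cast
  rw [← ha_eq, ← hb_eq]
  exact ⟨hmoment2, hmoment4⟩

/-- For `a, b > 0` with `b ≥ 3a²` and `21a² - 5b > 0`, the parameters
`s = 2√3·√((√30·a·√(b-3a²) + 15a² - 5b)/(21a² - 5b))` and
`lam = √((-√30·√(b-3a²) + 6a)/(21a² - 5b))` are well defined (the radicands are
nonnegative) and solve the moment-matching system `lam²·a = 1 - s²/12`,
`lam⁴·b = 7s⁴/240 - s²/2 + 3`. In particular, for `a = Γ(1 + 2/k)`, `b = Γ(1 + 4/k)`
with `k > 0`, a Weibull(`lam`, `k`) random variable `Z` satisfies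
`E[Z²] = 1 - s²/12` and `E[Z⁴] = 7s⁴/240 - s²/2 + 3`. -/
theorem stmt_7 (a b s lam : ℝ) (ha : 0 < a) (hb : 0 < b)
    (hb3a : 3 * a ^ 2 ≤ b) (h21 : 0 < 21 * a ^ 2 - 5 * b)
    (hs : s = 2 * Real.sqrt 3 *
      Real.sqrt ((Real.sqrt 30 * a * Real.sqrt (b - 3 * a ^ 2) + 15 * a ^ 2 - 5 * b) /
        (21 * a ^ 2 - 5 * b)))
    (hlam : lam = Real.sqrt ((-(Real.sqrt 30) * Real.sqrt (b - 3 * a ^ 2) + 6 * a) /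
        (21 * a ^ 2 - 5 * b))) :
    0 ≤ (Real.sqrt 30 * a * Real.sqrt (b - 3 * a ^ 2) + 15 * a ^ 2 - 5 * b) /
        (21 * a ^ 2 - 5 * b) ∧
    0 ≤ (-(Real.sqrt 30) * Real.sqrt (b - 3 * a ^ 2) + 6 * a) / (21 * a ^ 2 - 5 * b) ∧
    lam ^ 2 * a = 1 - s ^ 2 / 12 ∧
    lam ^ 4 * b = 7 * s ^ 4 / 240 - s ^ 2 / 2 + 3 ∧
    (∀ k : ℝ, 0 < k → a = Real.Gamma (1 + 2 / k) → b = Real.Gamma (1 + 4 / k) →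
      ∀ {Ω : Type} [inst : MeasurableSpace Ω] (P : Measure Ω), IsProbabilityMeasure P →
        ∀ Z : Ω → ℝ, Measurable Z →
          P.map Z = volume.withDensity (fun t => ENNReal.ofReal (weibullPDF lam k t)) →
            (∫ ω, (Z ω) ^ 2 ∂P = 1 - s ^ 2 / 12) ∧
              (∫ ω, (Z ω) ^ 4 ∂P = 7 * s ^ 4 / 240 - s ^ 2 / 2 + 3)) :=
  stmt_7_general a b s lam ha hb3a h21 hs hlam
end

section
/- Let σ > 0, let Γ be a Gamma-distributed random variable with shape 3/2 and rate 1/2 (Lebesgue density proportional to x^{1/2} e^{−x/2} on (0,∞)), let U be uniformly distributed on [−1/2, 1/2) and independent of Γ, and set S = 2σ√Γ. Then the product S·U is distributed as N(0, σ²): the pushforward of the product measure (Gamma(3/2, 1/2)) ⊗ (Unif[−1/2,1/2)) under (γ, u) ↦ 2σ√γ·u equals the Gaussian measure on ℝ with mean 0 and variance σ². -/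
/-!
Given `Γ = γ > 0`, the variable `2σ√γ·U` is uniform on `(-σ√γ, σ√γ)` with density `1 / (2σ√γ)`,
while the `Gamma(3/2, 1/2)` density is `√γ e^{-γ/2} / √(2π)`. The factors `√γ` cancel, so
`(Γ, 2σ√Γ·U)` has the joint density `e^{-γ/2} / (2σ√(2π))` on `{(γ, x) | (x/σ)² < γ}`.
Integrating out `γ` over `((x/σ)², ∞)` leaves `e^{-x²/(2σ²)} / (σ√(2π))`.
-/

open MeasureTheory ProbabilityTheory
open Real Set
open scoped ENNReal NNReal

lemma lintegral_exp_mul_Ioi {a : ℝ} (ha : a < 0) (c : ℝ) :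
    ∫⁻ x in Ioi c, ENNReal.ofReal (exp (a * x)) = ENNReal.ofReal (-exp (a * c) / a) := by
  rw [← ofReal_integral_eq_lintegral_ofReal (integrableOn_exp_mul_Ioi ha c)
    (ae_of_all _ fun x => (exp_pos _).le), integral_exp_mul_Ioi ha]

lemma map_const_mul_volume_restrict_Ioo {c : ℝ} (hc : 0 < c) (a b : ℝ) :
    (volume.restrict (Ioo a b)).map (c * ·)
      = ENNReal.ofReal c⁻¹ • volume.restrict (Ioo (c * a) (c * b)) := by
  have hpre : (c * ·) ⁻¹' Ioo (c * a) (c * b) = Ioo a b := by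
    rw [preimage_const_mul_Ioo₀ _ _ hc, mul_div_cancel_left₀ _ hc.ne',
      mul_div_cancel_left₀ _ hc.ne']
  rw [← hpre, ← Measure.restrict_map (measurable_const_mul _) measurableSet_Ioo,
    Real.map_volume_mul_left hc.ne', Measure.restrict_smul, abs_of_pos (inv_pos.2 hc)]

lemma Real.Gamma_three_halves : Gamma (3 / 2) = √π / 2 := by
  rw [show (3 / 2 : ℝ) = 1 / 2 + 1 by norm_num, Gamma_add_one (by norm_num), Gamma_one_half_eq]
  ring

-- Valid for all `γ`, since `√γ = 0` for `γ ≤ 0`.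
lemma gammaPDF_three_halves_half (γ : ℝ) :
    gammaPDF (3 / 2) (1 / 2) γ = ENNReal.ofReal (√γ * exp (-(1 / 2) * γ) / √(2 * π)) := by
  rcases lt_or_ge γ 0 with hγ | hγ
  · rw [gammaPDF_of_neg hγ, sqrt_eq_zero_of_nonpos hγ.le, zero_mul, zero_div, ENNReal.ofReal_zero]
  · rw [gammaPDF_of_nonneg hγ, Real.Gamma_three_halves, show (3 / 2 : ℝ) - 1 = 1 / 2 by norm_num,
      ← sqrt_eq_rpow, neg_mul]
    have hrate : (1 / 2 : ℝ) ^ (3 / 2 : ℝ) = 1 / (2 * √2) := by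
      rw [show (3 / 2 : ℝ) = 1 + 1 / 2 by norm_num, rpow_add (by norm_num), rpow_one,
        ← sqrt_eq_rpow, sqrt_div' _ zero_le_two, sqrt_one]
      ring
    rw [hrate, sqrt_mul zero_le_two]
    congr 1
    field_simp

noncomputable def gammaUniformJointDensity (σ : ℝ) : ℝ × ℝ → ℝ≥0∞ :=
  {p | (p.2 / σ) ^ 2 < p.1}.indicator
    fun p => ENNReal.ofReal (exp (-(1 / 2) * p.1) / (2 * σ * √(2 * π)))

@[fun_prop]
lemma measurable_gammaUniformJointDensity (σ : ℝ) : Measurable (gammaUniformJointDensity σ) :=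
  (by fun_prop : Measurable _).indicator (measurableSet_lt (by fun_prop) (by fun_prop))

lemma mem_Ioo_neg_mul_sqrt_iff {σ : ℝ} (hσ : 0 < σ) (γ x : ℝ) :
    x ∈ Ioo (-(σ * √γ)) (σ * √γ) ↔ (x / σ) ^ 2 < γ := by
  rw [mem_Ioo, ← abs_lt, ← div_lt_iff₀' hσ, lt_sqrt (by positivity), div_pow, sq_abs, ← div_pow]

lemma gammaPDF_mul_lintegral_scaled_uniform {σ : ℝ} (hσ : 0 < σ) {g : ℝ → ℝ≥0∞}
    (hg : Measurable g) (γ : ℝ) :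
    gammaPDF (3 / 2) (1 / 2) γ * ∫⁻ u in Ioo (-(1 / 2)) (1 / 2), g (2 * σ * √γ * u)
      = ∫⁻ x, gammaUniformJointDensity σ (γ, x) * g x := by
  rcases le_or_gt γ 0 with hγ | hγ
  · have hpdf : gammaPDF (3 / 2) (1 / 2) γ = 0 := by
      rw [gammaPDF_three_halves_half, sqrt_eq_zero_of_nonpos hγ, zero_mul, zero_div,
        ENNReal.ofReal_zero]
    have hzero : ∀ x, gammaUniformJointDensity σ (γ, x) = 0 := fun x =>
      indicator_of_notMem (s := {p : ℝ × ℝ | (p.2 / σ) ^ 2 < p.1})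
        (not_lt.2 (hγ.trans (sq_nonneg _))) _
    simp only [hpdf, hzero, zero_mul, lintegral_zero]
  have hc : 0 < 2 * σ * √γ := by positivity
  have hslice : ∀ x, gammaUniformJointDensity σ (γ, x) * g x
      = (Ioo (-(σ * √γ)) (σ * √γ)).indicator
          (fun x => ENNReal.ofReal (exp (-(1 / 2) * γ) / (2 * σ * √(2 * π))) * g x) x := by
    intro x
    simp only [gammaUniformJointDensity, indicator_apply, mem_ofPred_eq,
      mem_Ioo_neg_mul_sqrt_iff hσ, ite_mul, zero_mul]
  rw [← lintegral_map hg (measurable_const_mul _), map_const_mul_volume_restrict_Ioo hc,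
    lintegral_smul_measure, lintegral_congr hslice, lintegral_indicator measurableSet_Ioo,
    lintegral_const_mul _ hg, smul_eq_mul, ← mul_assoc]
  have hends :
      Ioo (2 * σ * √γ * -(1 / 2)) (2 * σ * √γ * (1 / 2)) = Ioo (-(σ * √γ)) (σ * √γ) := by
    congr 1 <;> ring
  rw [hends, gammaPDF_three_halves_half, ← ENNReal.ofReal_mul (by positivity)]
  congr 2
  field_simp

lemma lintegral_gammaUniformJointDensity_eq_gaussianPDF {σ : ℝ} (hσ : 0 < σ) (x : ℝ) :
    ∫⁻ γ, gammaUniformJointDensity σ (γ, x) = gaussianPDF 0 (σ ^ 2).toNNReal x := by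
  have hK : ∀ γ, ENNReal.ofReal (exp (-(1 / 2) * γ) / (2 * σ * √(2 * π)))
      = ENNReal.ofReal (2 * σ * √(2 * π))⁻¹ * ENNReal.ofReal (exp (-(1 / 2) * γ)) := fun γ => by
    rw [← ENNReal.ofReal_mul (by positivity), div_eq_inv_mul]
  change ∫⁻ γ, (Ioi ((x / σ) ^ 2)).indicator
    (fun γ => ENNReal.ofReal (exp (-(1 / 2) * γ) / (2 * σ * √(2 * π)))) γ = _
  rw [lintegral_indicator measurableSet_Ioi]
  simp_rw [hK]
  rw [lintegral_const_mul _ (by fun_prop), lintegral_exp_mul_Ioi (by norm_num),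
    ← ENNReal.ofReal_mul (by positivity), gaussianPDF, gaussianPDFReal,
    Real.coe_toNNReal _ (sq_nonneg σ), sqrt_mul (by positivity : (0 : ℝ) ≤ 2 * π) (σ ^ 2),
    sqrt_sq hσ.le]
  congr 1
  field_simp
  ring_nf

lemma lintegral_comp_gammaMeasure_prod_uniform {σ : ℝ} (hσ : 0 < σ) {g : ℝ → ℝ≥0∞}
    (hg : Measurable g) :
    ∫⁻ p, g (2 * σ * √p.1 * p.2)
        ∂(gammaMeasure (3 / 2) (1 / 2)).prod (volume.restrict (Ico (-(1 / 2)) (1 / 2)))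
      = ∫⁻ x, gaussianPDF 0 (σ ^ 2).toNNReal x * g x := by
  -- With `Ioo` the `x`-slices of the support are exactly the sets `Ioo (-(σ * √γ)) (σ * √γ)`.
  rw [← Measure.restrict_congr_set Ioo_ae_eq_Ico, lintegral_prod _ (by fun_prop), gammaMeasure,
    lintegral_withDensity_eq_lintegral_mul _
      (f := gammaPDF _ _) (measurable_gammaPDFReal _ _).ennreal_ofReal (by fun_prop)]
  simp_rw [Pi.mul_apply, gammaPDF_mul_lintegral_scaled_uniform hσ hg]
  rw [lintegral_lintegral_swap (by fun_prop)]
  refine lintegral_congr fun x => ?_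
  rw [lintegral_mul_const _ (by fun_prop), lintegral_gammaUniformJointDensity_eq_gaussianPDF hσ]

/-- Gaussian as a scale mixture of uniforms: if `Γ ~ Gamma(3/2, 1/2)`, `U ~ Unif[-1/2, 1/2)`
are independent, `σ > 0`, and `S = 2σ√Γ`, then `S·U ~ N(0, σ²)`: the pushforward of
`Gamma(3/2, 1/2) ⊗ Unif[-1/2, 1/2)` under `(γ, u) ↦ 2σ√γ·u` is the Gaussian measure with
mean `0` and variance `σ²`. -/
theorem stmt_16 (σ : ℝ) (hσ : 0 < σ) :
    ((gammaMeasure (3/2) (1/2)).prod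
        (volume.restrict (Set.Ico (-(1/2) : ℝ) (1/2)))).map
        (fun p => 2 * σ * Real.sqrt p.1 * p.2)
      = gaussianReal 0 (Real.toNNReal (σ ^ 2)) := by
  refine Measure.ext_of_lintegral _ fun g hg => ?_
  rw [lintegral_map hg (by fun_prop), lintegral_comp_gammaMeasure_prod_uniform hσ hg,
    gaussianReal_of_var_ne_zero _ (by positivity),
    lintegral_withDensity_eq_lintegral_mul _ (measurable_gaussianPDF _ _) hg]
  rfl
end

section
/- Let μ be the Gamma distribution with shape 3/2 and rate 1/2 on ℝ. Then (1/2)·log₂(2πe) − ∫ log₂(2√x) dμ(x) ≤ 0.521. Equivalently, the differential entropy of a standard Gaussian in bits, (1/2)log₂(2πe), exceeds E[log₂ S] for S = 2√Γ with Γ ∼ Gamma(3/2, 1/2) by at most 0.521 bits; this quantity equals (1/2)log₂π + (1 − ψ(3/2))/(2 ln 2) − 1, where ψ is the digamma function. -/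
open MeasureTheory ProbabilityTheory Real Set Filter Topology Asymptotics

/-!
Differentiating Euler's integral under the integral sign gives
`Γ'(a) = ∫₀^∞ t^(a-1) log t e^(-t) dt`, so the substitution `x = t / r` shows that
`X ∼ Gamma(a, r)` has `E[log X] = ψ(a) - log r`. With `ψ(3/2) = ψ(1/2) + 2 = 2 - γ - 2 log 2`
the excess equals `(log π + γ - 1) / (2 log 2)`, and the bound becomes
`log π + γ ≤ 1 + 1.042 log 2`, which holds with a margin of about `3·10⁻⁴`:
`log π < 1.1448` by the Taylor series of `exp`, and `γ ≤ H₃₂ - log 32 - 1/65` because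
`H_n - log n - 1/(2n+1)` decreases to `γ`, a consequence of `log (1 + 1/n) ≥ 2/(2n+1)`.
-/

section GammaLogMoment

variable {a r : ℝ}

lemma ofReal_rpow_mul_log_mul_exp_neg {t : ℝ} (ht : 0 < t) :
    ((t ^ (a - 1) * (log t * exp (-t)) : ℝ) : ℂ)
      = (t : ℂ) ^ ((a : ℂ) - 1) * (log t * exp (-t)) := by
  push_cast [Complex.ofReal_cpow ht.le]
  rfl

theorem integrableOn_rpow_mul_log_mul_exp_neg (ha : 0 < a) :
    IntegrableOn (fun t : ℝ => t ^ (a - 1) * (log t * exp (-t))) (Ioi 0) := by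
  have hexp : Continuous fun t : ℝ => (exp (-t) : ℂ) := by fun_prop
  have hmellin := (mellin_hasDerivAt_of_isBigO_rpow (s := (a : ℂ)) (b := 0)
    (hexp.continuousOn.locallyIntegrableOn measurableSet_Ioi) ?_ (lt_add_one _) ?_
    (by simpa using ha)).1
  · refine IntegrableOn.congr_fun hmellin.re (fun t ht => ?_) measurableSet_Ioi
    simp only [smul_eq_mul, Complex.real_smul, ← ofReal_rpow_mul_log_mul_exp_neg ht,
      RCLike.re_to_complex, Complex.ofReal_re]
  · rw [← isBigO_norm_left]
    simp_rw [Complex.norm_real, isBigO_norm_left]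
    simpa only [neg_one_mul] using (isLittleO_exp_neg_mul_rpow_atTop zero_lt_one _).isBigO
  · simp_rw [neg_zero, rpow_zero]
    exact isBigO_const_of_tendsto ((hexp.tendsto 0).mono_left nhdsWithin_le_nhds) (by simp)

theorem integral_rpow_mul_log_mul_exp_neg (ha : 0 < a) :
    ∫ t in Ioi 0, t ^ (a - 1) * (log t * exp (-t)) = Gamma a * (Complex.digamma a).re := by
  have hderiv : HasDerivAt Complex.Gamma
      (∫ t in Ioi 0, t ^ (a - 1) * (log t * exp (-t)) : ℝ) a := by
    rw [← integral_complex_ofReal, setIntegral_congr_fun measurableSet_Ioi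
      (fun t ht => ofReal_rpow_mul_log_mul_exp_neg (a := a) ht)]
    refine (Complex.hasDerivAt_GammaIntegral (by simpa using ha)).congr_of_eventuallyEq ?_
    filter_upwards [(isOpen_lt continuous_const Complex.continuous_re).mem_nhds
      (by simpa using ha)] with s hs using Complex.Gamma_eq_integral hs
  rw [Complex.digamma_def, logDeriv_apply, hderiv.deriv, Complex.Gamma_ofReal,
    ← Complex.ofReal_div, Complex.ofReal_re, mul_div_cancel₀ _ (Gamma_pos_of_pos ha).ne']

lemma rpow_mul_exp_neg_mul_mul_log_inv_mul (hr : 0 < r) {t : ℝ} (ht : 0 < t) :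
    (r⁻¹ * t) ^ (a - 1) * exp (-(r * (r⁻¹ * t))) * log (r⁻¹ * t)
      = r ^ (1 - a) * (t ^ (a - 1) * (log t * exp (-t)) - log r * (exp (-t) * t ^ (a - 1))) := by
  rw [mul_rpow (inv_nonneg.2 hr.le) ht.le, inv_rpow hr.le, mul_inv_cancel_left₀ hr.ne',
    log_mul (inv_ne_zero hr.ne') ht.ne', log_inv, ← rpow_neg hr.le, neg_sub]
  ring

theorem integrableOn_rpow_mul_exp_neg_mul_mul_log (ha : 0 < a) (hr : 0 < r) :
    IntegrableOn (fun x : ℝ => x ^ (a - 1) * exp (-(r * x)) * log x) (Ioi 0) := by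
  rw [← mul_zero r⁻¹, ← integrableOn_Ioi_comp_mul_left_iff _ _ (inv_pos.2 hr)]
  refine IntegrableOn.congr_fun ?_
    (fun t ht => (rpow_mul_exp_neg_mul_mul_log_inv_mul hr ht).symm) measurableSet_Ioi
  exact ((integrableOn_rpow_mul_log_mul_exp_neg ha).sub
    ((GammaIntegral_convergent ha).const_mul _)).const_mul _

theorem integral_rpow_mul_exp_neg_mul_mul_log (ha : 0 < a) (hr : 0 < r) :
    ∫ x in Ioi 0, x ^ (a - 1) * exp (-(r * x)) * log x
      = Gamma a * ((Complex.digamma a).re - log r) / r ^ a := by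
  have hsub := integral_comp_mul_left_Ioi (fun x => x ^ (a - 1) * exp (-(r * x)) * log x) 0
    (inv_pos.2 hr)
  rw [mul_zero, setIntegral_congr_fun measurableSet_Ioi
      (fun t ht => rpow_mul_exp_neg_mul_mul_log_inv_mul hr ht), integral_const_mul,
    integral_sub (integrableOn_rpow_mul_log_mul_exp_neg ha)
      ((GammaIntegral_convergent ha).const_mul _), integral_const_mul,
    integral_rpow_mul_log_mul_exp_neg ha, ← Gamma_eq_integral ha, inv_inv, smul_eq_mul] at hsub
  rw [rpow_sub hr, rpow_one] at hsub
  rw [eq_div_iff (rpow_pos_of_pos hr a).ne']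
  field_simp at hsub
  linear_combination -hsub

-- Holds at `x = 0` as well, since `log 0 = 0`.
lemma gammaPDFReal_mul_log (a r x : ℝ) :
    gammaPDFReal a r x * log x
      = (Ioi 0).indicator
          (fun x => r ^ a / Gamma a * (x ^ (a - 1) * exp (-(r * x)) * log x)) x := by
  rcases lt_trichotomy x 0 with hx | rfl | hx
  · simp [gammaPDFReal, hx.not_ge, hx.not_gt]
  · simp
  · simp only [gammaPDFReal, if_pos hx.le, indicator_of_mem (show x ∈ Ioi 0 from hx)]
    ring

lemma integral_gammaMeasure (ha : 0 < a) (hr : 0 < r) (g : ℝ → ℝ) :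
    ∫ x, g x ∂gammaMeasure a r = ∫ x, gammaPDFReal a r x * g x := by
  rw [gammaMeasure, integral_withDensity_eq_integral_toReal_smul (f := gammaPDF a r)
    (measurable_gammaPDFReal a r).ennreal_ofReal (ae_of_all _ fun _ => ENNReal.ofReal_lt_top)]
  simp_rw [gammaPDF, ENNReal.toReal_ofReal (gammaPDFReal_nonneg ha hr _), smul_eq_mul]

lemma integrable_gammaMeasure_iff (ha : 0 < a) (hr : 0 < r) {g : ℝ → ℝ} :
    Integrable g (gammaMeasure a r) ↔ Integrable (fun x => gammaPDFReal a r x * g x) := by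
  rw [gammaMeasure, integrable_withDensity_iff_integrable_smul' (f := gammaPDF a r)
    (measurable_gammaPDFReal a r).ennreal_ofReal (ae_of_all _ fun _ => ENNReal.ofReal_lt_top)]
  simp_rw [gammaPDF, ENNReal.toReal_ofReal (gammaPDFReal_nonneg ha hr _), smul_eq_mul]

theorem integrable_log_gammaMeasure (ha : 0 < a) (hr : 0 < r) :
    Integrable log (gammaMeasure a r) := by
  rw [integrable_gammaMeasure_iff ha hr]
  simp_rw [gammaPDFReal_mul_log]
  rw [integrable_indicator_iff measurableSet_Ioi]
  exact (integrableOn_rpow_mul_exp_neg_mul_mul_log ha hr).const_mul _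

theorem integral_log_gammaMeasure (ha : 0 < a) (hr : 0 < r) :
    ∫ x, log x ∂gammaMeasure a r = (Complex.digamma a).re - log r := by
  simp_rw [integral_gammaMeasure ha hr, gammaPDFReal_mul_log]
  rw [integral_indicator measurableSet_Ioi, integral_const_mul,
    integral_rpow_mul_exp_neg_mul_mul_log ha hr]
  have := (Gamma_pos_of_pos ha).ne'
  have := (rpow_pos_of_pos hr a).ne'
  field_simp

theorem ae_pos_gammaMeasure : ∀ᵐ x ∂gammaMeasure a r, 0 < x := by
  rw [gammaMeasure,
    ae_withDensity_iff (f := gammaPDF a r) (measurable_gammaPDFReal a r).ennreal_ofReal]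
  filter_upwards [Measure.ae_ne volume 0] with x hx0 hpdf
  exact lt_of_le_of_ne (not_lt.1 fun hneg => hpdf (gammaPDF_of_neg hneg)) hx0.symm

end GammaLogMoment

theorem Complex.digamma_three_halves :
    Complex.digamma (3 / 2) = 2 - 2 * Complex.log 2 - eulerMascheroniConstant := by
  have hhalf : ∀ m : ℕ, (1 / 2 : ℂ) ≠ -m := fun m h => by
    have := congrArg Complex.re h
    norm_num at this
    linarith [(Nat.cast_nonneg m : (0 : ℝ) ≤ m)]
  rw [show (3 / 2 : ℂ) = 1 / 2 + 1 by norm_num, Complex.digamma_apply_add_one _ hhalf,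
    Complex.digamma_one_half]
  ring

lemma integral_logb_two_mul_sqrt {μ : Measure ℝ} [IsProbabilityMeasure μ]
    (hpos : ∀ᵐ x ∂μ, 0 < x) (hlog : Integrable log μ) :
    ∫ x, logb 2 (2 * √x) ∂μ = 1 + (∫ x, log x ∂μ) / (2 * log 2) := by
  have hlog2 : log 2 ≠ 0 := (log_pos one_lt_two).ne'
  calc ∫ x, logb 2 (2 * √x) ∂μ = ∫ x, (1 + log x / (2 * log 2)) ∂μ := by
        refine integral_congr_ae (hpos.mono fun x (hx : 0 < x) => ?_)
        dsimp only
        rw [← log_div_log, log_mul two_ne_zero (sqrt_pos.2 hx).ne', log_sqrt hx.le]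
        field_simp
    _ = 1 + (∫ x, log x ∂μ) / (2 * log 2) := by
        rw [integral_add (integrable_const 1) (hlog.div_const _), integral_div]
        simp

lemma inv_add_one_add_inv_two_mul_add_one_sub_le_log {t : ℝ} (ht : 0 < t) :
    (t + 1)⁻¹ + (2 * t + 1)⁻¹ - (2 * (t + 1) + 1)⁻¹ ≤ log (t + 1) - log t := by
  have hdiff : log (t + 1) - log t = log (1 + t⁻¹) := by
    rw [← log_div (by positivity) ht.ne']
    congr 1
    field_simp
  rw [hdiff]
  refine le_trans ?_ (le_log_one_add_of_nonneg (inv_pos.2 ht).le)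
  rw [← sub_nonneg]
  have : 2 * t⁻¹ / (t⁻¹ + 2) - ((t + 1)⁻¹ + (2 * t + 1)⁻¹ - (2 * (t + 1) + 1)⁻¹)
      = 1 / ((t + 1) * (2 * t + 1) * (2 * t + 3)) := by
    field_simp
    ring
  rw [this]
  positivity

lemma eulerMascheroniConstant_le_harmonic_sub_log_sub (n : ℕ) (hn : n ≠ 0) :
    eulerMascheroniConstant ≤ harmonic n - log n - (2 * n + 1 : ℝ)⁻¹ := by
  set u : ℕ → ℝ := fun m =>
    harmonic (m + 1) - log ((m : ℝ) + 1) - (2 * ((m : ℝ) + 1) + 1)⁻¹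
  have hanti : Antitone u := by
    refine antitone_nat_of_succ_le fun m => ?_
    have := inv_add_one_add_inv_two_mul_add_one_sub_le_log (t := m + 1) (by positivity)
    simp only [u, harmonic_succ (m + 1)]
    push_cast
    linarith
  have hlim : Tendsto u atTop (𝓝 eulerMascheroniConstant) := by
    have hden : Tendsto (fun m : ℕ => 2 * ((m : ℝ) + 1) + 1) atTop atTop :=
      tendsto_atTop_mono (fun m => by linarith [(Nat.cast_nonneg m : (0 : ℝ) ≤ m)])
        tendsto_natCast_atTop_atTop
    have h := (tendsto_harmonic_sub_log.comp (tendsto_add_atTop_nat 1)).sub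
      (tendsto_inv_atTop_zero.comp hden)
    simpa [u, Function.comp_def] using h
  obtain ⟨m, rfl⟩ := Nat.exists_eq_succ_of_ne_zero hn
  simpa [u] using hanti.le_of_tendsto hlim m

lemma log_pi_lt : log π < 1.1448 := by
  rw [log_lt_iff_lt_exp pi_pos, show (1.1448 : ℝ) = 1 + 0.1448 by norm_num, exp_add]
  have htaylor := sum_le_exp_of_nonneg (x := 0.1448) (by norm_num) 4
  simp only [Finset.sum_range_succ, Finset.sum_range_zero, Nat.factorial] at htaylor
  norm_num at htaylor
  nlinarith [pi_lt_d4, exp_one_gt_d9]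

lemma log_pi_add_eulerMascheroniConstant_le :
    log π + eulerMascheroniConstant ≤ 1 + 1.042 * log 2 := by
  have hγ := eulerMascheroniConstant_le_harmonic_sub_log_sub 32 (by norm_num)
  rw [show ((32 : ℕ) : ℝ) = 2 ^ 5 by norm_num, log_pow] at hγ
  norm_num [harmonic, Finset.sum_range_succ] at hγ
  nlinarith [log_pi_lt, log_two_gt_d9]

/-- The excess, in bits, of the differential entropy of a standard Gaussian over
`E[log₂ S]` for `S = 2√Γ` with `Γ ~ Gamma(3/2, 1/2)`: it equals
`(1/2)log₂ π + (1 - ψ(3/2))/(2 ln 2) - 1` (where `ψ(3/2) = 2 - γ - 2 ln 2`, `γ` the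
Euler–Mascheroni constant) and is at most `0.521` bits. -/
theorem stmt_17 (μ : Measure ℝ) (hμ : μ = gammaMeasure (3/2) (1/2)) :
    (1/2) * Real.logb 2 (2 * Real.pi * Real.exp 1) - (∫ x, Real.logb 2 (2 * Real.sqrt x) ∂μ)
        ≤ 0.521 ∧
      (1/2) * Real.logb 2 (2 * Real.pi * Real.exp 1) - (∫ x, Real.logb 2 (2 * Real.sqrt x) ∂μ)
        = (1/2) * Real.logb 2 Real.pi
          + (1 - (2 - Real.eulerMascheroniConstant - 2 * Real.log 2)) / (2 * Real.log 2)
          - 1 := by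
  subst hμ
  have ha : (0 : ℝ) < 3 / 2 := by norm_num
  have hr : (0 : ℝ) < 1 / 2 := by norm_num
  have := isProbabilityMeasure_gammaMeasure ha hr
  have hlog2 : 0 < log 2 := log_pos one_lt_two
  have hmoment :
      ∫ x, log x ∂gammaMeasure (3 / 2) (1 / 2) = 2 - eulerMascheroniConstant - log 2 := by
    rw [integral_log_gammaMeasure ha hr, show ((3 / 2 : ℝ) : ℂ) = 3 / 2 by push_cast; rfl,
      Complex.digamma_three_halves, one_div, log_inv]
    norm_num [Complex.log_re]
    ring
  have hexcess :
      (1/2) * logb 2 (2 * π * exp 1) - ∫ x, logb 2 (2 * √x) ∂gammaMeasure (3/2) (1/2)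
        = (log π + eulerMascheroniConstant - 1) / (2 * log 2) := by
    rw [integral_logb_two_mul_sqrt ae_pos_gammaMeasure (integrable_log_gammaMeasure ha hr),
      hmoment, ← log_div_log, log_mul (by positivity) (exp_pos 1).ne',
      log_mul two_ne_zero pi_ne_zero, log_exp]
    field_simp
    ring
  constructor
  · rw [hexcess, div_le_iff₀ (by positivity)]
    linarith [log_pi_add_eulerMascheroniConstant_le]
  · rw [hexcess, ← log_div_log]
    field_simp
    ring
end
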